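/- Suppose the system Σ is observable and the matrix A ∈ ℂ^{n×n} has n pairwise distinct eigenvalues, with eigenbasis v₁,…,v_n of ℂ^n (A v_j = λ_j v_j, λ_j distinct). Then δ(Σ) = min over j ∈ {1,…,n} of |supp(C v_j)|, where for a vector w ∈ ℂ^N, supp(w) := { i ∈ {1,…,N} : w_i ≠ 0 }. -/

import Mathlib

open Matrix

/-- The behavior of the LTI system Σ = (A, C): all output trajectories
`y(t) = C A^t x₀` for some initial condition `x₀`. -/
def behavior {n N : ℕ} (A : Matrix (Fin n) (Fin n) ℂ) (C : Matrix (Fin N) (Fin n) ℂ) :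
    Set (ℕ → Fin N → ℂ) :=
  { y | ∃ x₀ : Fin n → ℂ, ∀ t, y t = (C * A ^ t).mulVec x₀ }

/-- Observability of Σ = (A, C): the map `x₀ ↦ (C A^t x₀)ₜ` is injective. -/
def Observable {n N : ℕ} (A : Matrix (Fin n) (Fin n) ℂ) (C : Matrix (Fin N) (Fin n) ℂ) : Prop :=
  Function.Injective (fun x₀ : Fin n → ℂ => fun t : ℕ => (C * A ^ t).mulVec x₀)

/-- The weight `‖y‖` of a trajectory: the number of component trajectories
that are not identically zero. -/
noncomputable def weight {N : ℕ} (y : ℕ → Fin N → ℂ) : ℕ :=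
  Set.ncard {i : Fin N | ∃ t, y t i ≠ 0}

/-- The security index `δ(Σ) = min { ‖y‖ : y ∈ B, y ≠ 0 }`. -/
noncomputable def secIndex {n N : ℕ} (A : Matrix (Fin n) (Fin n) ℂ)
    (C : Matrix (Fin N) (Fin n) ℂ) : ℕ :=
  sInf {w : ℕ | ∃ y ∈ behavior A C, y ≠ 0 ∧ w = weight y}

/-! Expanding the initial state in the eigenbasis, `x₀ = ∑ⱼ cⱼ vⱼ`, the `i`-th output is the
exponential sum `t ↦ ∑ⱼ cⱼ (C vⱼ)ᵢ λⱼᵗ`. Since the `λⱼ` are distinct, a Vandermonde argument shows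
that it vanishes identically exactly when every `cⱼ (C vⱼ)ᵢ` does. Hence the support of a
trajectory is the union of the supports of the `C vⱼ` with `cⱼ ≠ 0`: it contains one of them, and
the trajectory starting at `vⱼ` has support exactly `supp (C vⱼ)`. Observability makes those
eigen-trajectories nonzero. -/

section

variable {R : Type*} [CommRing R] {ι m n : Type*} [Fintype ι] [Fintype n] [DecidableEq n]

theorem Matrix.pow_mulVec_of_mulVec_eq_smul {A : Matrix n n R} {v : n → R} {μ : R}
    (h : A *ᵥ v = μ • v) (t : ℕ) : (A ^ t) *ᵥ v = μ ^ t • v := by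
  induction t with
  | zero => simp
  | succ t ih => rw [pow_succ', ← mulVec_mulVec, ih, mulVec_smul, h, smul_smul, pow_succ]

theorem Matrix.mul_pow_mulVec_sum_smul {A : Matrix n n R} (C : Matrix m n R) {lam : ι → R}
    {v : ι → n → R} (heig : ∀ j, A *ᵥ v j = lam j • v j) (c : ι → R) (t : ℕ) :
    (C * A ^ t) *ᵥ ∑ j, c j • v j = ∑ j, (c j * lam j ^ t) • C *ᵥ v j := by
  simp only [← mulVec_mulVec, mulVec_sum, mulVec_smul, pow_mulVec_of_mulVec_eq_smul (heig _),
    smul_smul]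

end

theorem exists_sum_mul_pow_ne_zero_iff {R : Type*} [CommRing R] [IsDomain R] {n : ℕ}
    {lam : Fin n → R} (hlam : Function.Injective lam) (a : Fin n → R) :
    (∃ t : ℕ, ∑ j, a j * lam j ^ t ≠ 0) ↔ a ≠ 0 := by
  constructor
  · rintro ⟨t, ht⟩ rfl
    simp at ht
  · intro ha
    by_contra! h
    exact ha (Matrix.eq_zero_of_forall_pow_sum_mul_pow_eq_zero hlam fun i => h i)

theorem exists_mul_pow_mulVec_sum_smul_ne_zero_iff {R : Type*} [CommRing R] [IsDomain R]
    {m : Type*} {n : ℕ} {A : Matrix (Fin n) (Fin n) R} (C : Matrix m (Fin n) R)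
    {lam : Fin n → R} (hlam : Function.Injective lam) {v : Fin n → Fin n → R}
    (heig : ∀ j, A *ᵥ v j = lam j • v j) (c : Fin n → R) (i : m) :
    (∃ t : ℕ, ((C * A ^ t) *ᵥ ∑ j, c j • v j) i ≠ 0) ↔ ∃ j, c j * (C *ᵥ v j) i ≠ 0 := by
  have hcomp : ∀ t : ℕ, ((C * A ^ t) *ᵥ ∑ j, c j • v j) i =
      ∑ j, (c j * (C *ᵥ v j) i) * lam j ^ t := fun t => by
    rw [mul_pow_mulVec_sum_smul C heig, Finset.sum_apply]
    exact Finset.sum_congr rfl fun j _ => by simp only [Pi.smul_apply, smul_eq_mul]; ring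
  simp only [hcomp, exists_sum_mul_pow_ne_zero_iff hlam, Function.ne_iff, Pi.zero_apply]

section

variable {n N : ℕ} {A : Matrix (Fin n) (Fin n) ℂ} {C : Matrix (Fin N) (Fin n) ℂ}

theorem Observable.trajectory_ne_zero (hobs : Observable A C) {x₀ : Fin n → ℂ} (hx₀ : x₀ ≠ 0) :
    (fun t => (C * A ^ t) *ᵥ x₀) ≠ 0 := fun h =>
  hx₀ (hobs (h.trans (funext fun _ => (mulVec_zero _).symm)))

theorem weight_eigenTrajectory {v : Fin n → ℂ} {μ : ℂ} (heig : A *ᵥ v = μ • v) :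
    weight (fun t => (C * A ^ t) *ᵥ v) = Set.ncard {i | (C *ᵥ v) i ≠ 0} := by
  have hcomp : ∀ t i, ((C * A ^ t) *ᵥ v) i = μ ^ t * (C *ᵥ v) i := fun t i => by
    rw [← mulVec_mulVec, pow_mulVec_of_mulVec_eq_smul heig, mulVec_smul, Pi.smul_apply,
      smul_eq_mul]
  unfold weight
  congr 1
  ext i
  simp only [Set.mem_ofPred_eq, hcomp]
  exact ⟨fun ⟨_, h⟩ => right_ne_zero_of_mul h, fun h => ⟨0, by simpa using h⟩⟩

theorem exists_eigenvector_support_le_weight {lam : Fin n → ℂ} (hlam : Function.Injective lam)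
    {v : Fin n → Fin n → ℂ} (heig : ∀ j, A *ᵥ v j = lam j • v j)
    (hspan : Submodule.span ℂ (Set.range v) = ⊤) {y : ℕ → Fin N → ℂ} (hy : y ∈ behavior A C)
    (hy0 : y ≠ 0) : ∃ j, Set.ncard {i | (C *ᵥ v j) i ≠ 0} ≤ weight y := by
  obtain ⟨x₀, hy⟩ := hy
  obtain ⟨c, rfl⟩ := (Submodule.mem_span_range_iff_exists_fun ℂ).1 (hspan ▸ Submodule.mem_top : x₀ ∈ _)
  obtain ⟨j, hj⟩ : ∃ j, c j ≠ 0 := by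
    by_contra! hc
    exact hy0 (funext fun t => by simp [hy t, hc])
  refine ⟨j, Set.ncard_le_ncard (fun i hi => ?_) (Set.toFinite _)⟩
  simp only [hy, Set.mem_ofPred_eq, exists_mul_pow_mulVec_sum_smul_ne_zero_iff C hlam heig]
  exact ⟨j, mul_ne_zero hj hi⟩

end

/-- Theorem 6, particular case: if `A` has `n` pairwise distinct eigenvalues
with eigenbasis `v_1, …, v_n`, then `δ(Σ) = min_j |supp(C v_j)|`. -/
theorem secIndex_eq_min_eigenvector_support {n N : ℕ}
    (A : Matrix (Fin n) (Fin n) ℂ) (C : Matrix (Fin N) (Fin n) ℂ)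
    (hobs : Observable A C)
    (lam : Fin n → ℂ) (hlam : Function.Injective lam)
    (v : Fin n → Fin n → ℂ) (heig : ∀ j, A.mulVec (v j) = lam j • v j)
    (hindep : LinearIndependent ℂ v)
    (hspan : Submodule.span ℂ (Set.range v) = ⊤) :
    secIndex A C =
      sInf {d : ℕ | ∃ j : Fin n, d = Set.ncard {i : Fin N | C.mulVec (v j) i ≠ 0}} := by
  refine csInf_eq_csInf_of_forall_exists_le ?_ ?_
  · rintro _ ⟨y, hy, hy0, rfl⟩
    obtain ⟨j, hj⟩ := exists_eigenvector_support_le_weight hlam heig hspan hy hy0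
    exact ⟨_, ⟨j, rfl⟩, hj⟩
  · rintro _ ⟨j, rfl⟩
    exact ⟨_, ⟨_, ⟨v j, fun _ => rfl⟩, hobs.trajectory_ne_zero (hindep.ne_zero j), rfl⟩,
      (weight_eigenTrajectory (heig j)).le⟩
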